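/- arXiv:2504.02966 — 3 statements merged into one kernel-verified Lean document; each statement's English description precedes it below -/
import Mathlib

section
/- For every prime p, the local ring 𝔽_p⟦x, y, z⟧/(x³ + y³ + xyz) is F-pure. -/
universe u v

open TensorProduct CategoryTheory

/-- A ring homomorphism `f : R →+* S` is *pure* if for every `R`-module `M`, the induced map
`M ⊗[R] R → M ⊗[R] S` is injective (where `S` is viewed as an `R`-module via `f`). -/
def IsPureRingHom {R : Type u} {S : Type v} [CommRing R] [CommRing S] (f : R →+* S) : Prop :=
  letI := f.toAlgebra
  ∀ (M : Type u) [AddCommGroup M] [Module R M],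
    Function.Injective (LinearMap.lTensor M (Algebra.linearMap R S))

/-- A ring of characteristic `p` is *F-pure* if the Frobenius endomorphism `r ↦ r ^ p`
is a pure ring homomorphism. -/
def IsFPure (p : ℕ) (R : Type u) [CommRing R] : Prop :=
  CharP R p ∧ ∀ F : R →+* R, (∀ r, F r = r ^ p) → IsPureRingHom F

/-- `R` has finite injective dimension as a module over itself: there is an injective
resolution of `R` that vanishes in all sufficiently large degrees. -/
def HasFiniteInjDim (R : Type u) [CommRing R] : Prop :=
  ∃ (I : InjectiveResolution (ModuleCat.of R R)) (n : ℕ),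
    ∀ m : ℕ, n ≤ m → Limits.IsZero (I.cocomplex.X m)

/-- A Noetherian local ring with finite injective dimension over itself. -/
def IsGorensteinLocal (R : Type u) [CommRing R] : Prop :=
  IsNoetherianRing R ∧ IsLocalRing R ∧ HasFiniteInjDim R

/-- A Noetherian ring `R` is a *splinter* if every module-finite ring map `R → S` inducing a
surjection on prime spectra admits an `R`-linear left inverse. -/
def IsSplinter (R : Type u) [CommRing R] : Prop :=
  ∀ (S : Type u) [CommRing S] (f : R →+* S), f.Finite →
    Function.Surjective (PrimeSpectrum.comap f) →
    letI := f.toAlgebra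
    ∃ g : S →ₗ[R] R, ∀ r : R, g (f r) = r

/-- A ring `R` is *perfectoid* (with respect to the prime `p`) if it is `p`-adically complete,
Frobenius is surjective on `R/pR`, the kernel of Fontaine's map `θ : W(R♭) → R` is principal,
and `p` admits a `p`-th root up to a unit. -/
def IsPerfectoid (p : ℕ) [Fact p.Prime] (R : Type u) [CommRing R] : Prop :=
  IsAdicComplete (Ideal.span {(p : R)}) R ∧
  Function.Surjective (fun x : R ⧸ Ideal.span {(p : R)} => x ^ p) ∧
  (∀ (_ : CharP (R ⧸ Ideal.span {(p : R)}) p),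
    ∃ θ : WittVector p (Perfection (R ⧸ Ideal.span {(p : R)}) p) →+* R,
      (∀ w, Ideal.Quotient.mk (Ideal.span {(p : R)}) (θ w) =
        Perfection.coeff (R ⧸ Ideal.span {(p : R)}) p 0 (w.coeff 0)) ∧
      (RingHom.ker θ).IsPrincipal) ∧
  ∃ ϖ u : R, IsUnit u ∧ ϖ ^ p = (p : R) * u

/-- A local ring `(R, 𝔪)` with `p ∈ 𝔪` is *perfectoid pure* if it admits a pure ring map to
some perfectoid ring. -/
def IsPerfectoidPure (p : ℕ) [Fact p.Prime] (R : Type u) [CommRing R] : Prop :=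
  ∃ (B : Type u) (_ : CommRing B) (f : R →+* B), IsPerfectoid p B ∧ IsPureRingHom f

/-- `R` is a `[𝔭, x]`-subring of `T`: a quasi-local subring of `T` whose maximal ideal is the
contraction of the maximal ideal of `T` (equivalently, units of `R` are exactly the elements of
`R` that are units of `T`), of cardinality strictly smaller than that of `T`, meeting every
prime `𝔮 ⊆ 𝔭` with `x ∉ 𝔮` in `(0)`. -/
def IsPXSubring {T : Type u} [CommRing T] (𝔭 : Ideal T) (x : T) (R : Subring T) : Prop :=
  (∀ r : R, ¬ IsUnit r ↔ ¬ IsUnit (r : T)) ∧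
  Cardinal.mk R < Cardinal.mk T ∧
  ∀ 𝔮 : Ideal T, 𝔮.IsPrime → 𝔮 ≤ 𝔭 → x ∉ 𝔮 → ∀ r ∈ 𝔮, r ∈ R → r = 0

/-- `M_{I,x} = ⋃_{e ≥ 0} ⋂_{f ≥ e} (I^{[p^f]} : x^{p^f})`. -/
def FrobColonUnion {A : Type u} [CommRing A] (p : ℕ) (I : Ideal A) (x : A) : Set A :=
  ⋃ e : ℕ, ⋂ f : ℕ, ⋂ (_ : e ≤ f),
    (↑(Submodule.colon (Ideal.span ((fun a => a ^ p ^ f) '' (I : Set A)))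
        (Ideal.span {x ^ p ^ f})) : Set A)

/-!
Fedder's criterion for the hypersurface `f = x³ + y³ + xyz` in `S = 𝔽_p⟦x, y, z⟧`. The map `T`
taking `s` to the series whose `γ`-coefficient is the `x^(pγ + (p-1, p-1, p-1))`-coefficient of `s`
satisfies `T (r ^ p * s) = r * T s`. The constant term of `T (f ^ (p - 1))` is the coefficient of
`(xyz) ^ (p - 1)` in `f ^ (p - 1)`, which is `1` since `x³ + y³` does not involve `z`. So
`u = T (f ^ (p - 1))` is a unit and `s ↦ u⁻¹ * T (f ^ (p - 1) * s)` is a Frobenius splitting of `S`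
mapping `(f)` into `(f)` (because `f ^ (p - 1) * f = f ^ p`). It descends to a Frobenius splitting
of `S/(f)`, i.e. an `S/(f)`-linear retraction of Frobenius, and a ring map with a linear
retraction is pure.
-/

theorem isPureRingHom_of_retraction {R : Type u} {S : Type v} [CommRing R] [CommRing S]
    (f : R →+* S) (g : S →+ R) (hg : ∀ r s, g (f r * s) = r * g s) (hg1 : g 1 = 1) :
    IsPureRingHom f := by
  let _ := f.toAlgebra
  intro M _ _
  let G : S →ₗ[R] R := { g with map_smul' := hg }
  have hG : G ∘ₗ Algebra.linearMap R S = LinearMap.id := LinearMap.ext_ring (by simp [G, hg1])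
  refine Function.LeftInverse.injective (g := LinearMap.lTensor M G) fun x => ?_
  rw [← LinearMap.comp_apply, ← LinearMap.lTensor_comp, hG, LinearMap.lTensor_id,
    LinearMap.id_apply]

theorem isFPure_of_frobeniusSplitting {R : Type u} [CommRing R] (p : ℕ) [CharP R p]
    (φ : R →+ R) (hφ : ∀ r s, φ (r ^ p * s) = r * φ s) (hφ1 : φ 1 = 1) : IsFPure p R :=
  ⟨‹_›, fun F hF => isPureRingHom_of_retraction F φ (fun r s => by rw [hF, hφ]) hφ1⟩

theorem isFPure_quotient_of_frobeniusSplitting {R : Type u} [CommRing R] (p : ℕ) (I : Ideal R)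
    [CharP (R ⧸ I) p] (φ : R →+ R) (hφ : ∀ r s, φ (r ^ p * s) = r * φ s) (hφ1 : φ 1 = 1)
    (hφI : ∀ a ∈ I, φ a ∈ I) : IsFPure p (R ⧸ I) := by
  let φI : R ⧸ I →+ R ⧸ I := QuotientAddGroup.map I.toAddSubgroup I.toAddSubgroup φ hφI
  have hφI_mk (a : R) : φI (Ideal.Quotient.mk I a) = Ideal.Quotient.mk I (φ a) := rfl
  refine isFPure_of_frobeniusSplitting p φI (fun r s => ?_)
    (by rw [← map_one (Ideal.Quotient.mk I), hφI_mk, hφ1])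
  obtain ⟨r, rfl⟩ := Ideal.Quotient.mk_surjective r
  obtain ⟨s, rfl⟩ := Ideal.Quotient.mk_surjective s
  rw [← map_pow, ← map_mul, hφI_mk, hφI_mk, hφ, map_mul]

theorem isFPure_quotient_span_singleton_of_isUnit {R : Type u} [CommRing R] (p : ℕ) [NeZero p]
    (f : R) [CharP (R ⧸ Ideal.span {f}) p] (T : R →+ R) (hT : ∀ r s, T (r ^ p * s) = r * T s)
    (hf : IsUnit (T (f ^ (p - 1)))) : IsFPure p (R ⧸ Ideal.span {f}) := by
  obtain ⟨u, hu⟩ := hf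
  let φ : R →+ R :=
    (AddMonoidHom.mulLeft ↑u⁻¹).comp (T.comp (AddMonoidHom.mulLeft (f ^ (p - 1))))
  have hφ (s : R) : φ s = ↑u⁻¹ * T (f ^ (p - 1) * s) := rfl
  refine isFPure_quotient_of_frobeniusSplitting p _ φ (fun r s => ?_) ?_ (fun a ha => ?_)
  · rw [hφ, hφ, mul_left_comm, hT, mul_left_comm]
  · rw [hφ, mul_one, ← hu, Units.inv_mul]
  · obtain ⟨c, rfl⟩ := Ideal.mem_span_singleton'.1 ha
    have hfp : f ^ (p - 1) * (c * f) = f ^ p * c := by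
      rw [← pow_sub_one_mul (NeZero.ne p) f]
      ring
    rw [hφ, hfp, hT]
    exact Ideal.mul_mem_left _ _ (Ideal.mul_mem_right _ _ (Ideal.mem_span_singleton_self f))

theorem charP_quotient_span_singleton_of_not_isUnit (K : Type*) {A : Type*} [Field K]
    [CommRing A] [Algebra K A] (p : ℕ) [CharP K p] {f : A} (hf : ¬IsUnit f) :
    CharP (A ⧸ Ideal.span {f}) p :=
  have : Nontrivial (A ⧸ Ideal.span {f}) :=
    Ideal.Quotient.nontrivial_iff.2 (mt Ideal.span_singleton_eq_top.1 hf)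
  charP_of_injective_algebraMap (algebraMap K _).injective p

open Finset.HasAntidiagonal

namespace MvPowerSeries

variable {σ K : Type*} [CommRing K]

noncomputable def frobeniusTrace (p : ℕ) (d : σ →₀ ℕ) :
    MvPowerSeries σ K →+ MvPowerSeries σ K where
  toFun s γ := coeff (p • γ + d) s
  map_zero' := rfl
  map_add' _ _ := rfl

theorem coeff_frobeniusTrace (p : ℕ) (d γ : σ →₀ ℕ) (s : MvPowerSeries σ K) :
    coeff γ (frobeniusTrace p d s) = coeff (p • γ + d) s := rfl

theorem coeff_nsmul_add_expand_mul [DecidableEq σ] {p : ℕ} (hp : p ≠ 0) {d : σ →₀ ℕ}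
    (hd : ∀ i, d i < p) (r s : MvPowerSeries σ K) (γ : σ →₀ ℕ) :
    coeff (p • γ + d) (expand p hp r * s) =
      ∑ x ∈ antidiagonal γ, coeff x.1 r * coeff (p • x.2 + d) s := by
  let e : (σ →₀ ℕ) × (σ →₀ ℕ) ↪ (σ →₀ ℕ) × (σ →₀ ℕ) :=
    ⟨fun x => (p • x.1, p • x.2 + d), fun x y h => by
      simp only [Prod.mk.injEq, add_left_inj] at h
      exact Prod.ext (nsmul_right_injective hp h.1) (nsmul_right_injective hp h.2)⟩
  have he (x : (σ →₀ ℕ) × (σ →₀ ℕ)) : e x = (p • x.1, p • x.2 + d) := rfl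
  have hsub : (antidiagonal γ).map e ⊆ antidiagonal (p • γ + d) := by
    simp only [Finset.subset_iff, Finset.mem_map, mem_antidiagonal]
    rintro _ ⟨x, rfl, rfl⟩
    simp only [he, smul_add]
    abel
  rw [coeff_mul, ← Finset.sum_subset hsub, Finset.sum_map]
  · simp only [he, coeff_expand_smul]
  -- A term outside the image of `e` vanishes: `coeff α (expand p r) ≠ 0` forces `α = p • β`,
  -- and then `d < p` forces `β ≤ γ`.
  rintro ⟨α, ε⟩ hαε hnot
  rw [mem_antidiagonal] at hαε
  by_cases hα : ∀ i, p ∣ α i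
  · obtain ⟨β, rfl⟩ : ∃ β, p • β = α :=
      ⟨α.mapRange (· / p) (Nat.zero_div p), by ext i; simp [Nat.mul_div_cancel' (hα i)]⟩
    have hi (i : σ) : p * β i + ε i = p * γ i + d i := by simpa using congr($hαε i)
    have hβγ : β ≤ γ := fun i => by
      by_contra! h
      nlinarith [hi i, hd i, Nat.mul_le_mul_left p (Nat.succ_le_of_lt h)]
    have hε : p • (γ - β) + d = ε := by
      ext i
      have := hi i
      have := Nat.mul_le_mul_left p (hβγ i)
      simp only [Finsupp.coe_add, Finsupp.coe_smul, Finsupp.coe_tsub, Pi.add_apply,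
        Pi.smul_apply, Pi.sub_apply, smul_eq_mul, Nat.mul_sub]
      omega
    refine absurd (Finset.mem_map.2 ⟨(β, γ - β), ?_, by rw [he, hε]⟩) hnot
    exact mem_antidiagonal.2 (add_tsub_cancel_of_le hβγ)
  · push Not at hα
    obtain ⟨i, hi⟩ := hα
    simp [coeff_expand_of_not_dvd p hp r hi]

theorem frobeniusTrace_expand_mul {p : ℕ} (hp : p ≠ 0) {d : σ →₀ ℕ} (hd : ∀ i, d i < p)
    (r s : MvPowerSeries σ K) :
    frobeniusTrace p d (expand p hp r * s) = r * frobeniusTrace p d s := by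
  classical
  ext γ
  rw [coeff_frobeniusTrace, coeff_nsmul_add_expand_mul hp hd, coeff_mul]
  rfl

theorem frobeniusTrace_pow_mul {p : ℕ} [Fact p.Prime] {d : σ →₀ ℕ} (hd : ∀ i, d i < p)
    (r s : MvPowerSeries σ (ZMod p)) :
    frobeniusTrace p d (r ^ p * s) = r * frobeniusTrace p d s := by
  have hp : p ≠ 0 := (Fact.out : p.Prime).ne_zero
  rw [← map_frobenius_expand p hp, ZMod.frobenius_zmod, map_id, RingHom.id_apply,
    frobeniusTrace_expand_mul hp hd]

theorem coeff_pow_eq_zero_of_forall_coeff_eq_zero {g : MvPowerSeries σ K} {i : σ}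
    (hg : ∀ α : σ →₀ ℕ, α i ≠ 0 → coeff α g = 0) (n : ℕ) {α : σ →₀ ℕ} (hα : α i ≠ 0) :
    coeff α (g ^ n) = 0 := by
  classical
  induction n generalizing α with
  | zero => simp [coeff_one, show α ≠ 0 by rintro rfl; exact hα rfl]
  | succ n ih =>
    rw [pow_succ, coeff_mul]
    refine Finset.sum_eq_zero fun x hx => ?_
    have hsum : x.1 i + x.2 i = α i := by
      rw [← Finset.HasAntidiagonal.mem_antidiagonal.1 hx]
      rfl
    by_cases h : x.1 i = 0
    · rw [hg x.2 (by omega), mul_zero]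
    · rw [ih h, zero_mul]

theorem coeff_nsmul_pow_add_monomial {g : MvPowerSeries σ K} {i : σ}
    (hg : ∀ α : σ →₀ ℕ, α i ≠ 0 → coeff α g = 0) {e : σ →₀ ℕ} (he : e i ≠ 0) (k : ℕ) :
    coeff (k • e) ((g + monomial e 1) ^ k) = 1 := by
  rw [add_pow, map_sum, Finset.sum_eq_single 0 (fun j hj hj0 => ?_) (by simp)]
  · simp [monomial_pow]
  rw [monomial_pow, one_pow, mul_comm, ← nsmul_eq_mul, map_nsmul, coeff_mul_monomial,
    if_pos (nsmul_le_nsmul_left zero_le (Nat.sub_le k j)),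
    coeff_pow_eq_zero_of_forall_coeff_eq_zero hg j, zero_mul, smul_zero]
  have hjk : j ≤ k := Nat.lt_succ_iff.1 (Finset.mem_range.1 hj)
  simpa [← Nat.sub_mul, Nat.sub_sub_self hjk] using mul_ne_zero hj0 he

end MvPowerSeries

open MvPowerSeries

/-- For every prime `p`, the local ring `𝔽_p⟦x, y, z⟧/(x³ + y³ + xyz)` is `F`-pure. -/
theorem isFPure_fermat_like (p : ℕ) [Fact p.Prime] :
    IsFPure p (MvPowerSeries (Fin 3) (ZMod p) ⧸
      Ideal.span {(MvPowerSeries.X 0 : MvPowerSeries (Fin 3) (ZMod p)) ^ 3 +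
        MvPowerSeries.X 1 ^ 3 + MvPowerSeries.X 0 * MvPowerSeries.X 1 * MvPowerSeries.X 2}) := by
  set e : Fin 3 →₀ ℕ := Finsupp.equivFunOnFinite.symm 1
  have hxyz : (X 0 * X 1 * X 2 : MvPowerSeries (Fin 3) (ZMod p)) = monomial e 1 := by
    simp only [X, monomial_mul_monomial, mul_one]
    congr
    ext i
    fin_cases i <;> simp [e]
  have hz (α : Fin 3 →₀ ℕ) (hα : α 2 ≠ 0) :
      coeff α (X 0 ^ 3 + X 1 ^ 3 : MvPowerSeries (Fin 3) (ZMod p)) = 0 := by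
    classical
    have h0 : α ≠ Finsupp.single 0 3 := by rintro rfl; simp at hα
    have h1 : α ≠ Finsupp.single 1 3 := by rintro rfl; simp at hα
    simp [coeff_X_pow, h0, h1]
  have := charP_quotient_span_singleton_of_not_isUnit (ZMod p) p
    (A := MvPowerSeries (Fin 3) (ZMod p)) (f := X 0 ^ 3 + X 1 ^ 3 + X 0 * X 1 * X 2)
    (by simp [isUnit_iff_constantCoeff])
  rw [hxyz] at this ⊢
  refine isFPure_quotient_span_singleton_of_isUnit p _ (frobeniusTrace p ((p - 1) • e))
    (frobeniusTrace_pow_mul fun i => by simp [e, (Fact.out : p.Prime).pos]) ?_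
  rw [isUnit_iff_constantCoeff, ← coeff_zero_eq_constantCoeff_apply, coeff_frobeniusTrace,
    smul_zero, zero_add, coeff_nsmul_pow_add_monomial hz (by simp [e])]
  exact isUnit_one
end

section
/- Let p be a prime with p ≡ 2 (mod 3). Then the local ring 𝔽_p⟦x, y, z⟧/(x³ + y³ + z³) is not F-pure. -/
universe u v

open TensorProduct CategoryTheory

/-!
If `R` is F-pure, every ideal `I` is Frobenius closed: `r ^ p ∈ I^[p]` forces `r ∈ I`, because
`(R ⧸ I) ⊗_R F_*R ≅ F_*(R ⧸ I^[p])` and purity makes `R ⧸ I` inject into it. In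
`R = 𝔽_p⟦x, y, z⟧/(x³ + y³ + z³)` with `p ≡ 2 (mod 3)` we have
`x^{2p} = x · (-(y³ + z³))^{(2p-1)/3} ∈ (y^p, z^p) = (y, z)^[p]`, since every monomial of
`(y³ + z³)^{(2p-1)/3}` has a `y`- or `z`-exponent at least `p`. So `x² ∈ (y, z)` in `R`, which
fails: with weights `1, 3, 3` on `x, y, z`, every element of `(y, z, x³ + y³ + z³)` has weighted
order at least `3`, while `x²` has weighted order `2`.
-/

theorem IsPureRingHom.mem_of_map_mem_map {R : Type u} {S : Type v} [CommRing R] [CommRing S]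
    {f : R →+* S} (hf : IsPureRingHom f) {I : Ideal R} {r : R} (hr : f r ∈ I.map f) :
    r ∈ I := by
  let := f.toAlgebra
  have hr1 : (1 : R ⧸ I) ⊗ₜ[R] f r = 0 := by
    rw [← Algebra.TensorProduct.quotIdealMapEquivQuotTensor_mk,
      map_eq_zero_iff _ (AlgEquiv.injective _), Ideal.Quotient.eq_zero_iff_mem]
    exact hr
  have hr2 : Ideal.Quotient.mk I r ⊗ₜ[R] (1 : S) = 0 := by
    calc Ideal.Quotient.mk I r ⊗ₜ[R] (1 : S) = (r • (1 : R ⧸ I)) ⊗ₜ[R] (1 : S) := by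
          rw [Algebra.smul_def, mul_one]; rfl
      _ = (1 : R ⧸ I) ⊗ₜ[R] (r • (1 : S)) := TensorProduct.smul_tmul _ _ _
      _ = 0 := by rw [Algebra.smul_def, mul_one]; exact hr1
  rw [← Ideal.Quotient.eq_zero_iff_mem]
  apply (TensorProduct.rid R (R ⧸ I)).symm.injective
  apply hf (R ⧸ I)
  simpa using hr2

theorem IsFPure.mem_of_pow_mem {p : ℕ} [Fact p.Prime] {R : Type u} [CommRing R]
    (hR : IsFPure p R) {I : Ideal R} {r : R}
    (hr : r ^ p ∈ Ideal.span ((· ^ p) '' (I : Set R))) : r ∈ I := by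
  have := hR.1
  have : ExpChar R p := ExpChar.prime Fact.out
  exact (hR.2 (frobenius R p) fun _ => rfl).mem_of_map_mem_map hr

theorem pow_two_mul_mem_span_pow_of_sum_cubes_eq_zero {R : Type*} [CommRing R]
    {p : ℕ} (hp : p % 3 = 2) {a b c : R} (h : a ^ 3 + b ^ 3 + c ^ 3 = 0) :
    a ^ (2 * p) ∈ Ideal.span {b ^ p, c ^ p} := by
  have hpow : ∀ x ∈ ({b, c} : Set R),
      (x ^ 3) ^ ((p + 1) / 3) ∈ Ideal.span {b ^ p, c ^ p} := by
    rintro x hx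
    rw [← pow_mul, show 3 * ((p + 1) / 3) = p + 1 by omega, pow_succ]
    exact Ideal.mul_mem_right _ _ (Ideal.subset_span (by rcases hx with rfl | rfl <;> simp))
  have hsum := Ideal.add_pow_mem_of_pow_mem_of_le _ (hpow b (by simp)) (hpow c (by simp))
    (k := (2 * p - 1) / 3) (by omega)
  rw [show 2 * p = 3 * ((2 * p - 1) / 3) + 1 by omega, pow_succ, pow_mul,
    show a ^ 3 = -(b ^ 3 + c ^ 3) by linear_combination h, neg_pow]
  exact Ideal.mul_mem_right _ _ (Ideal.mul_mem_left _ _ hsum)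

namespace MvPowerSeries

theorem le_weightedOrder_of_mem_span {σ R : Type*} [CommSemiring R] (w : σ → ℕ) {n : ℕ∞}
    {s : Set (MvPowerSeries σ R)} (hs : ∀ f ∈ s, n ≤ f.weightedOrder w)
    {f : MvPowerSeries σ R} (hf : f ∈ Ideal.span s) : n ≤ f.weightedOrder w := by
  induction hf using Submodule.span_induction with
  | mem g hg => exact hs g hg
  | zero => simp
  | add g h _ _ hg hh => exact (le_min hg hh).trans (min_weightedOrder_le_add w)
  | smul c g _ hg => exact hg.trans (le_add_self.trans (le_weightedOrder_mul w))

theorem weightedOrder_X_pow {σ R : Type*} [CommSemiring R] [Nontrivial R] (w : σ → ℕ) (i : σ)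
    (n : ℕ) : (X i ^ n : MvPowerSeries σ R).weightedOrder w = (n * w i : ℕ) := by
  rw [X_pow_eq, weightedOrder_monomial_of_ne_zero _ one_ne_zero, Finsupp.weight_single,
    smul_eq_mul]

theorem X_zero_sq_notMem_span_X_one_X_two_sup_span_sum_cubes {k : Type*} [CommRing k]
    [Nontrivial k] :
    (X 0 ^ 2 : MvPowerSeries (Fin 3) k) ∉
      Ideal.span {X 1, X 2} ⊔ Ideal.span {X 0 ^ 3 + X 1 ^ 3 + X 2 ^ 3} := by
  set w : Fin 3 → ℕ := fun i => if i = 0 then 1 else 3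
  have hX : ∀ i (n : ℕ),
      (X i ^ n : MvPowerSeries (Fin 3) k).weightedOrder w = (n * w i : ℕ) :=
    weightedOrder_X_pow w
  have hgen : ∀ f ∈ ({X 1, X 2} ∪ {X 0 ^ 3 + X 1 ^ 3 + X 2 ^ 3} :
      Set (MvPowerSeries (Fin 3) k)), 3 ≤ f.weightedOrder w := by
    rintro f ((rfl | rfl) | rfl)
    · simpa [w] using (hX 1 1).ge
    · simpa [w] using (hX 2 1).ge
    · calc (3 : ℕ∞) ≤ min (min ((X 0 ^ 3 : MvPowerSeries (Fin 3) k).weightedOrder w)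
            ((X 1 ^ 3 : MvPowerSeries (Fin 3) k).weightedOrder w))
            ((X 2 ^ 3 : MvPowerSeries (Fin 3) k).weightedOrder w) := by
            simp only [hX, w]; decide
        _ ≤ _ := (min_le_min_right _ (min_weightedOrder_le_add w)).trans
            (min_weightedOrder_le_add w)
  rw [← Ideal.span_union]
  intro h
  have h3 := le_weightedOrder_of_mem_span w hgen h
  rw [hX] at h3
  norm_num [w] at h3

end MvPowerSeries

open MvPowerSeries in
/-- If `p ≡ 2 (mod 3)`, then `𝔽_p⟦x, y, z⟧/(x³ + y³ + z³)` is not `F`-pure. -/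
theorem not_isFPure_fermat_cubic (p : ℕ) [Fact p.Prime] (hp3 : p % 3 = 2) :
    ¬ IsFPure p (MvPowerSeries (Fin 3) (ZMod p) ⧸
      Ideal.span {(MvPowerSeries.X 0 : MvPowerSeries (Fin 3) (ZMod p)) ^ 3 +
        MvPowerSeries.X 1 ^ 3 + MvPowerSeries.X 2 ^ 3}) := by
  set q := Ideal.Quotient.mk (Ideal.span {(X 0 : MvPowerSeries (Fin 3) (ZMod p)) ^ 3 +
    X 1 ^ 3 + X 2 ^ 3})
  intro hR
  have hcube : q (X 0) ^ 3 + q (X 1) ^ 3 + q (X 2) ^ 3 = 0 := by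
    simp only [← map_pow, ← map_add]
    exact Ideal.Quotient.eq_zero_iff_mem.2 (Ideal.mem_span_singleton_self _)
  have hfrob : (q (X 0) ^ 2) ^ p ∈
      Ideal.span ((· ^ p) '' (Ideal.span {q (X 1), q (X 2)} : Set _)) := by
    rw [← pow_mul]
    refine Ideal.span_mono ?_ (pow_two_mul_mem_span_pow_of_sum_cubes_eq_zero hp3 hcube)
    rintro _ (rfl | rfl) <;> exact ⟨_, Ideal.subset_span (by simp), rfl⟩
  have hmem := hR.mem_of_pow_mem hfrob
  rw [← Set.image_pair, ← Ideal.map_span, ← map_pow, Ideal.mem_quotient_iff_mem_sup] at hmem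
  exact X_zero_sq_notMem_span_X_one_X_two_sup_span_sum_cubes hmem
end

section
/- Let (T, m) be a complete Noetherian local domain of mixed characteristic (0, p) and let π ∈ T be a nonzerodivisor such that T/πT is a domain of characteristic p > 0 (so πT⟦w⟧ is a prime ideal of T⟦w⟧). Then T⟦w⟧ admits an [mT⟦w⟧, π]-subring if and only if π lies in the radical of the ideal (p) of T. -/
universe u v

open TensorProduct CategoryTheory

/-!
If `π ∈ √(p)`, the image of `ℤ_(p)` in `T⟦w⟧` is the required subring: the integers prime to `p`
are units of `T⟦w⟧` while `p` is not, so `ℤ_(p) → T⟦w⟧` is a local homomorphism; its image is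
countable, hence smaller than `T⟦w⟧`; and since the only primes of `ℤ_(p)` are `0` and `(p)`, the
image meets trivially every prime of `T⟦w⟧` not containing `p`, in particular every prime not
containing `π`. Conversely, if a prime `P ⊇ (p)` of `T` misses `π`, then `P T⟦w⟧` is a prime of
`T⟦w⟧` inside `𝔪 T⟦w⟧` missing `π` and containing the nonzero integer `p`, which lies in every
subring.
-/

open Cardinal

namespace PowerSeries

variable {R : Type*} [CommRing R]

theorem mem_ker_map_mk_iff {I : Ideal R} {f : PowerSeries R} :
    f ∈ RingHom.ker (map (Ideal.Quotient.mk I)) ↔ ∀ n, coeff n f ∈ I := by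
  simp only [RingHom.mem_ker, PowerSeries.ext_iff, coeff_map, map_zero,
    Ideal.Quotient.eq_zero_iff_mem]

theorem mem_map_C_of_forall_coeff_mem {I : Ideal R} (hI : I.FG) {f : PowerSeries R}
    (hf : ∀ n, coeff n f ∈ I) : f ∈ I.map C := by
  obtain ⟨s, rfl⟩ := hI
  have hcoeff (n : ℕ) : ∃ c : R → R, ∑ i ∈ s, c i * i = coeff n f := by
    obtain ⟨c, -, hc⟩ := Submodule.mem_span_finset.1 (hf n)
    exact ⟨c, by simpa only [smul_eq_mul] using hc⟩
  choose c hc using hcoeff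
  have hf : f = ∑ i ∈ s, mk (fun n => c n i) * C i := by
    ext n
    simp only [map_sum, coeff_mul_C, coeff_mk, hc]
  rw [hf]
  exact Ideal.sum_mem _ fun i hi =>
    Ideal.mul_mem_left _ _ (Ideal.mem_map_of_mem _ (Ideal.subset_span hi))

theorem map_C_eq_ker_map_mk {I : Ideal R} (hI : I.FG) :
    I.map C = RingHom.ker (map (Ideal.Quotient.mk I)) := by
  refine le_antisymm (Ideal.map_le_iff_le_comap.2 fun r hr => ?_) fun f hf =>
    mem_map_C_of_forall_coeff_mem hI (mem_ker_map_mk_iff.1 hf)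
  rw [Ideal.mem_comap, mem_ker_map_mk_iff]
  intro n
  rw [coeff_C]
  split_ifs
  exacts [hr, I.zero_mem]

theorem mem_map_C_iff {I : Ideal R} (hI : I.FG) {f : PowerSeries R} :
    f ∈ I.map C ↔ ∀ n, coeff n f ∈ I := by
  rw [map_C_eq_ker_map_mk hI, mem_ker_map_mk_iff]

theorem isPrime_map_C {P : Ideal R} [P.IsPrime] (hP : P.FG) : (P.map C).IsPrime := by
  rw [map_C_eq_ker_map_mk hP]
  exact RingHom.ker_isPrime _

theorem aleph0_lt_mk [Nontrivial R] : ℵ₀ < #(PowerSeries R) := by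
  have hmk : Function.Injective (mk : (ℕ → R) → PowerSeries R) := fun f g h =>
    funext fun n => by simpa using congrArg (coeff n) h
  calc ℵ₀ < 2 ^ ℵ₀ := cantor _
    _ ≤ #R ^ ℵ₀ := power_le_power_right (two_le_iff.2 ⟨0, 1, zero_ne_one⟩)
    _ = #(ℕ → R) := by simp
    _ ≤ #(PowerSeries R) := mk_le_of_injective hmk

theorem isUnit_intCast_iff [IsLocalRing R] {p : ℕ} [CharP (IsLocalRing.ResidueField R) p]
    (hp : p.Prime) {z : ℤ} : IsUnit (z : PowerSeries R) ↔ ¬ (p : ℤ) ∣ z := by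
  rw [isUnit_iff_constantCoeff, map_intCast, ← isUnit_map_iff (IsLocalRing.residue R), map_intCast,
    CharP.isUnit_intCast_iff hp]

end PowerSeries

instance Localization.countable {R : Type*} [CommRing R] [Countable R] (M : Submonoid R) :
    Countable (Localization M) :=
  (IsLocalization.mk'_surjective M).countable

theorem RingHom.isUnit_of_isUnit_coe_range {A B : Type*} [CommRing A] [CommRing B] (f : A →+* B)
    [IsLocalHom f] {r : f.range} (hr : IsUnit (r : B)) : IsUnit r := by
  obtain ⟨y, hy⟩ := r.2
  have : f.rangeRestrict y = r := Subtype.ext hy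
  exact this ▸ (isUnit_of_map_unit f y (hy ▸ hr)).map f.rangeRestrict

instance Int.isPrime_span_natCast (p : ℕ) [hp : Fact p.Prime] :
    (Ideal.span {(p : ℤ)}).IsPrime :=
  (Ideal.span_singleton_prime (by exact_mod_cast hp.out.ne_zero)).2
    (Nat.prime_iff_prime_int.1 hp.out)

section LocalizationAtPrime

variable {p : ℕ} [Fact p.Prime] {A : Type*} [CommRing A]
  (hA : ∀ z : ℤ, IsUnit (z : A) ↔ ¬ (p : ℤ) ∣ z)

noncomputable def Int.localizationAtPrimeLift :
    Localization.AtPrime (Ideal.span {(p : ℤ)}) →+* A :=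
  IsLocalization.lift (M := (Ideal.span {(p : ℤ)}).primeCompl) (g := Int.castRingHom A) fun b =>
    (hA b).2 (mt Ideal.mem_span_singleton.2 b.2)

theorem Int.localizationAtPrimeLift_comp_algebraMap :
    (Int.localizationAtPrimeLift hA).comp (algebraMap ℤ _) = Int.castRingHom A :=
  IsLocalization.lift_comp _

theorem Int.algebraMap_mem_maximalIdeal_localizationAtPrime :
    algebraMap ℤ (Localization.AtPrime (Ideal.span {(p : ℤ)})) p ∈
      IsLocalRing.maximalIdeal _ := by
  rw [← Localization.AtPrime.map_eq_maximalIdeal]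
  exact Ideal.mem_map_of_mem _ (Ideal.mem_span_singleton_self _)

instance Int.isLocalHom_localizationAtPrimeLift :
    IsLocalHom (Int.localizationAtPrimeLift hA) := by
  refine ⟨fun y hy => ?_⟩
  by_contra hny
  have hy_mem : y ∈ Ideal.map (algebraMap ℤ _) (Ideal.span {(p : ℤ)}) := by
    rw [Localization.AtPrime.map_eq_maximalIdeal]
    exact hny
  have hlift := Ideal.mem_map_of_mem (Int.localizationAtPrimeLift hA) hy_mem
  rw [Ideal.map_map, Int.localizationAtPrimeLift_comp_algebraMap, Ideal.map_span,
    Set.image_singleton, eq_intCast, Ideal.mem_span_singleton'] at hlift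
  obtain ⟨a, ha⟩ := hlift
  rw [← ha] at hy
  exact (hA p).1 (isUnit_of_mul_isUnit_right hy) dvd_rfl

theorem Int.comap_localizationAtPrimeLift_eq_bot {Q : Ideal A} [Q.IsPrime]
    (hpQ : (p : A) ∉ Q) : Q.comap (Int.localizationAtPrimeLift hA) = ⊥ := by
  by_contra hne
  -- `ℤ_(p)` has dimension one, so its only nonzero prime is the maximal ideal, which contains `p`.
  have hmax := IsLocalRing.eq_maximalIdeal ((Ideal.IsPrime.comap _).isMaximal hne)
  have hp := hmax ▸ Int.algebraMap_mem_maximalIdeal_localizationAtPrime (p := p)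
  rw [Ideal.mem_comap, ← RingHom.comp_apply, Int.localizationAtPrimeLift_comp_algebraMap,
    eq_intCast] at hp
  exact hpQ (by exact_mod_cast hp)

end LocalizationAtPrime

theorem IsPXSubring.mem_of_natCast_mem {T : Type*} [CommRing T] [IsNoetherianRing T]
    {I : Ideal T} {x : T} {R : Subring (PowerSeries T)}
    (hR : IsPXSubring (I.map PowerSeries.C) (PowerSeries.C x) R) {P : Ideal T} [P.IsPrime]
    (hPI : P ≤ I) {n : ℕ} (hn : (n : T) ≠ 0) (hnP : (n : T) ∈ P) : x ∈ P := by
  by_contra hxP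
  have hP : P.FG := IsNoetherian.noetherian P
  have hxQ : PowerSeries.C x ∉ P.map PowerSeries.C := fun h => hxP <| by
    simpa using (PowerSeries.mem_map_C_iff hP).1 h 0
  have hnQ : (n : PowerSeries T) ∈ P.map PowerSeries.C :=
    map_natCast (PowerSeries.C (R := T)) n ▸ Ideal.mem_map_of_mem _ hnP
  have hn0 := hR.2.2 _ (PowerSeries.isPrime_map_C hP) (Ideal.map_mono hPI) hxQ _ hnQ
    (natCast_mem R n)
  exact hn (by simpa using congrArg PowerSeries.constantCoeff hn0)

theorem isPXSubring_range_localizationAtPrimeLift {p : ℕ} [Fact p.Prime] {A : Type*}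
    [CommRing A] (hA : ∀ z : ℤ, IsUnit (z : A) ↔ ¬ (p : ℤ) ∣ z) (hcard : ℵ₀ < #A)
    (𝔭 : Ideal A) {x : A} (hx : x ∈ (Ideal.span {(p : A)}).radical) :
    IsPXSubring 𝔭 x (Int.localizationAtPrimeLift hA).range := by
  refine ⟨fun r => not_congr ⟨fun h => h.map (Subring.subtype _),
    RingHom.isUnit_of_isUnit_coe_range _⟩, ?_, ?_⟩
  · exact (mk_le_aleph0_iff.2 (RingHom.rangeRestrict_surjective _).countable).trans_lt hcard
  · rintro Q hQ - hxQ _ hyQ ⟨y, rfl⟩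
    have hpQ : (p : A) ∉ Q := fun hpQ =>
      hxQ (hQ.radical_le_iff.2 ((Ideal.span_singleton_le_iff_mem _).2 hpQ) hx)
    have hy : y ∈ Q.comap (Int.localizationAtPrimeLift hA) := hyQ
    rw [Int.comap_localizationAtPrimeLift_eq_bot hA hpQ, Ideal.mem_bot] at hy
    rw [hy, map_zero]

theorem exists_px_subring_powerSeries_iff_general (p : ℕ) (hp : p.Prime) (T : Type u) [CommRing T]
    [IsNoetherianRing T] [IsLocalRing T]
    (hchar0 : CharZero T) (hres : CharP (IsLocalRing.ResidueField T) p)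
    (π : T) :
    (∃ R : Subring (PowerSeries T),
        IsPXSubring ((IsLocalRing.maximalIdeal T).map (PowerSeries.C (R := T)))
          (PowerSeries.C (R := T) π) R) ↔
      π ∈ (Ideal.span {(p : T)}).radical := by
  have := Fact.mk hp
  constructor
  · rintro ⟨R, hR⟩
    rw [Ideal.radical_eq_sInf, Submodule.mem_sInf]
    rintro P ⟨hpP, hP⟩
    exact hR.mem_of_natCast_mem (IsLocalRing.le_maximalIdeal hP.ne_top)
      (Nat.cast_ne_zero.2 hp.ne_zero) ((Ideal.span_singleton_le_iff_mem _).1 hpP)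
  · intro hπ
    refine ⟨_, isPXSubring_range_localizationAtPrimeLift
      (fun z => PowerSeries.isUnit_intCast_iff hp) PowerSeries.aleph0_lt_mk _ ?_⟩
    have hCπ := Ideal.map_radical_le PowerSeries.C (Ideal.mem_map_of_mem PowerSeries.C hπ)
    rwa [Ideal.map_span, Set.image_singleton, map_natCast] at hCπ

/-- Let `(T, 𝔪)` be a complete Noetherian local domain of mixed characteristic `(0,p)` and let
`π ∈ T` be a nonzerodivisor such that `T/πT` is a domain of characteristic `p` (so `πT⟦w⟧` is a
prime ideal of `T⟦w⟧`). Then `T⟦w⟧` admits an `[𝔪T⟦w⟧, π]`-subring if and only if `π` lies in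
the radical of the ideal `(p)` of `T`. -/
theorem exists_px_subring_powerSeries_iff (p : ℕ) (hp : p.Prime) (T : Type u) [CommRing T]
    [IsNoetherianRing T] [IsLocalRing T] [IsDomain T]
    (hcomplete : IsAdicComplete (IsLocalRing.maximalIdeal T) T)
    (hchar0 : CharZero T) (hres : CharP (IsLocalRing.ResidueField T) p)
    (π : T) (hπ : π ∈ nonZeroDivisors T)
    (hdom : IsDomain (T ⧸ Ideal.span {π})) (hcharp : CharP (T ⧸ Ideal.span {π}) p)
    (hπprime : (Ideal.span {(PowerSeries.C (R := T) π : PowerSeries T)}).IsPrime) :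
    (∃ R : Subring (PowerSeries T),
        IsPXSubring ((IsLocalRing.maximalIdeal T).map (PowerSeries.C (R := T)))
          (PowerSeries.C (R := T) π) R) ↔
      π ∈ (Ideal.span {(p : T)}).radical :=
  exists_px_subring_powerSeries_iff_general p hp T hchar0 hres π
end
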